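/- arXiv:2201.11564 — 2 statements merged into one kernel-verified Lean document; each statement's English description precedes it below -/
import Mathlib

section
/- Let λ ∈ (0,1) and let f, g : ℝ → ℝ≥0 be measurable with all superlevel sets {f > t} and {g > t} being open intervals (possibly empty). Suppose further that for t ∈ (ε₀, T₀) the superlevel sets are given by {f > t} = (a_f(log t), b_f(log t)) and {g > t} = (a_g(log t), b_g(log t)), where a_f, a_g are convex functions and b_f, b_g are concave functions of log t on (log ε₀, log T₀). Then the functions with these level sets are log-concave on the corresponding range. More precisely: if φ : ℝ → ℝ≥0 satisfies {φ > t} = (𝔞(log t), 𝔟(log t)) for t in a multiplicative interval, with 𝔞 convex and 𝔟 concave, and {φ > t} = ∅ above the interval, then φ is log-concave. -/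
/-!
In the coordinates `(p, x) = (log level, point)` the region `{(p, x) | a p < x < b p}` is convex,
being the intersection of the strict epigraph of the convex `a` with the strict hypograph of the
concave `b`. Hence `exp p < φ x` and `exp q < φ y` give `exp ((1 - t) p + t q) < φ ((1 - t) x + t y)`,
and letting `p ↑ log (φ x)`, `q ↑ log (φ y)` yields log-concavity. Every positive value of `φ`
lies in `(ε₀, T₀]`, so these levels stay in the window where the level sets are known.
-/

/-- A function `φ : ℝ → ℝ≥0` is log-concave. -/
def IsLogConcave (φ : ℝ → ℝ) : Prop :=
  ∀ x y t : ℝ, t ∈ Set.Ioo (0:ℝ) 1 → φ x ^ (1 - t) * φ y ^ t ≤ φ ((1 - t) * x + t * y)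

open Set Real Filter Topology

theorem lt_apply_convexCombo_of_superlevel_eq_Ioo {E : Type*} [AddCommGroup E] [Module ℝ E]
    {s : Set E} {a b g : E → ℝ} {φ : ℝ → ℝ} (ha : ConvexOn ℝ s a) (hb : ConcaveOn ℝ s b)
    (hlevel : ∀ p ∈ s, {x | g p < φ x} = Ioo (a p) (b p)) {p q : E} {x y t : ℝ}
    (hp : p ∈ s) (hq : q ∈ s) (hx : g p < φ x) (hy : g q < φ y) (ht₀ : 0 ≤ t) (ht₁ : t ≤ 1) :
    g ((1 - t) • p + t • q) < φ ((1 - t) * x + t * y) := by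
  replace hx : x ∈ Ioo (a p) (b p) := hlevel p hp ▸ hx
  replace hy : y ∈ Ioo (a q) (b q) := hlevel q hq ▸ hy
  have hmem := (ha.convex_strict_epigraph.inter hb.convex_strict_hypograph)
    (x := (p, x)) ⟨⟨hp, hx.1⟩, hp, hx.2⟩ (y := (q, y)) ⟨⟨hq, hy.1⟩, hq, hy.2⟩
    (sub_nonneg.2 ht₁) ht₀ (sub_add_cancel 1 t)
  obtain ⟨⟨hs, ha'⟩, -, hb'⟩ := hmem
  simp only [Prod.fst_add, Prod.snd_add, Prod.smul_fst, Prod.smul_snd, smul_eq_mul] at hs ha' hb'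
  exact (hlevel _ hs).ge ⟨ha', hb'⟩

theorem lt_of_pos_of_superlevel_subset {α : Type*} {φ : α → ℝ} {ε : ℝ}
    (h : ∀ t, 0 < t → t ≤ ε → {x | t < φ x} ⊆ {x | ε < φ x}) {w : α} (hw : 0 < φ w) :
    ε < φ w := by
  by_contra! hwε
  exact hwε.not_gt (h (φ w / 2) (half_pos hw) ((half_le_self hw.le).trans hwε) (half_lt_self hw))

theorem rpow_mul_rpow_le_of_forall_exp_le {u v c L t : ℝ} (hu : 0 < u) (hv : 0 < v)
    (hLu : L < log u) (hLv : L < log v)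
    (h : ∀ p ∈ Ioo L (log u), ∀ q ∈ Ioo L (log v), exp ((1 - t) * p + t * q) ≤ c) :
    u ^ (1 - t) * v ^ t ≤ c := by
  have hlim : Tendsto (fun r : ℝ × ℝ => exp ((1 - t) * r.1 + t * r.2))
      (𝓝[<] log u ×ˢ 𝓝[<] log v) (𝓝 (u ^ (1 - t) * v ^ t)) := by
    have hcont : Continuous fun r : ℝ × ℝ => exp ((1 - t) * r.1 + t * r.2) := by fun_prop
    convert (hcont.tendsto (log u, log v)).mono_left
      ((Filter.prod_mono nhdsWithin_le_nhds nhdsWithin_le_nhds).trans nhds_prod_eq.ge) using 2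
    rw [rpow_def_of_pos hu, rpow_def_of_pos hv, ← exp_add]
    ring_nf
  exact le_of_tendsto hlim (eventually_of_mem (prod_mem_prod (Ioo_mem_nhdsLT hLu)
    (Ioo_mem_nhdsLT hLv)) fun r hr => h r.1 hr.1 r.2 hr.2)

/-- If the superlevel sets of `φ` are given by `(𝔞(log t), 𝔟(log t))` with `𝔞` convex and
`𝔟` concave on a multiplicative interval, empty above the interval, and equal to the support
below it, then `φ` is log-concave. -/
theorem log_concave_of_level_sets (ε₀ T₀ : ℝ) (hε₀ : 0 < ε₀) (hεT : ε₀ < T₀)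
    (φ : ℝ → ℝ) (hφ0 : ∀ x, 0 ≤ φ x) (a b : ℝ → ℝ)
    (ha : ConvexOn ℝ (Set.Ioo (Real.log ε₀) (Real.log T₀)) a)
    (hb : ConcaveOn ℝ (Set.Ioo (Real.log ε₀) (Real.log T₀)) b)
    (hlevel : ∀ t ∈ Set.Ioo ε₀ T₀,
      {x | t < φ x} = Set.Ioo (a (Real.log t)) (b (Real.log t)))
    (habove : ∀ t : ℝ, T₀ ≤ t → {x | t < φ x} = ∅)
    (hbelow : ∀ t : ℝ, 0 < t → t ≤ ε₀ →
      {x | t < φ x} = ⋃ s ∈ Set.Ioo ε₀ T₀, Set.Ioo (a (Real.log s)) (b (Real.log s))) :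
    IsLogConcave φ := by
  have hT₀ : 0 < T₀ := hε₀.trans hεT
  have hle (w : ℝ) : φ w ≤ T₀ := not_lt.1 fun hw => (habove T₀ le_rfl).subset hw
  have hpos (w : ℝ) : 0 < φ w → ε₀ < φ w := lt_of_pos_of_superlevel_subset fun s hs hsε => by
    rw [hbelow s hs hsε]
    exact iUnion₂_subset fun r hr => (hlevel r hr).ge.trans fun x hx => hr.1.trans hx
  have hlevel_log : ∀ p ∈ Ioo (log ε₀) (log T₀), {x | exp p < φ x} = Ioo (a p) (b p) :=
    fun p hp => by
      simpa using hlevel (exp p) ⟨(log_lt_iff_lt_exp hε₀).1 hp.1, (lt_log_iff_exp_lt hT₀).1 hp.2⟩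
  intro x y t ⟨ht₀, ht₁⟩
  rcases (hφ0 x).eq_or_lt with hx | hx
  · rw [← hx, zero_rpow (sub_pos.2 ht₁).ne', zero_mul]
    exact hφ0 _
  rcases (hφ0 y).eq_or_lt with hy | hy
  · rw [← hy, zero_rpow ht₀.ne', mul_zero]
    exact hφ0 _
  refine rpow_mul_rpow_le_of_forall_exp_le hx hy (log_lt_log hε₀ (hpos x hx))
    (log_lt_log hε₀ (hpos y hy)) fun p hp q hq => ?_
  exact (lt_apply_convexCombo_of_superlevel_eq_Ioo ha hb hlevel_log
    ⟨hp.1, hp.2.trans_le (log_le_log hx (hle x))⟩ ⟨hq.1, hq.2.trans_le (log_le_log hy (hle y))⟩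
    ((lt_log_iff_exp_lt hx).1 hp.2) ((lt_log_iff_exp_lt hy).1 hq.2) ht₀.le ht₁.le).le
end

section
/- Let τ ∈ (0,1/2], λ ∈ [τ, 1−τ], and let F, G, H : ℝ≥0 → ℝ≥0 be measurable with H(r^(1−λ) s^λ) ≥ F(r)^(1−λ) G(s)^λ for all r, s ≥ 0. Then ∫_{ℝ≥0} H ≥ (∫_{ℝ≥0} F)^(1−λ) (∫_{ℝ≥0} G)^λ. -/
open MeasureTheory ENNReal NNReal

open Pointwise Set

/-- AM–GM for two `ℝ≥0∞` numbers. -/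
lemma my_ennreal_am_gm (a b : ℝ≥0∞) {w : ℝ} (hw0 : 0 < w) (hw1 : w < 1) :
    a ^ (1 - w) * b ^ w ≤ ENNReal.ofReal (1 - w) * a + ENNReal.ofReal w * b := by
  have h1w : 0 < 1 - w := by linarith
  rcases eq_or_ne a ⊤ with rfl | ha
  · rcases eq_or_ne b 0 with rfl | hb
    · rw [ENNReal.zero_rpow_of_pos hw0, mul_zero]; exact zero_le
    · have h : ENNReal.ofReal (1 - w) * (⊤ : ℝ≥0∞) + ENNReal.ofReal w * b = ⊤ := by
        rw [ENNReal.mul_top (by simp only [ne_eq, ENNReal.ofReal_eq_zero, not_le]; linarith),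
          top_add]
      rw [h]; exact le_top
  rcases eq_or_ne b ⊤ with rfl | hb
  · have h : ENNReal.ofReal (1 - w) * a + ENNReal.ofReal w * (⊤ : ℝ≥0∞) = ⊤ := by
      rw [ENNReal.mul_top (by simp only [ne_eq, ENNReal.ofReal_eq_zero, not_le]; linarith),
        add_top]
    rw [h]; exact le_top
  · lift a to ℝ≥0 using ha
    lift b to ℝ≥0 using hb
    have hsum : (1 - w).toNNReal + w.toNNReal = 1 := by
      rw [← Real.toNNReal_add h1w.le hw0.le]
      norm_num
    have key := NNReal.geom_mean_le_arith_mean2_weighted (1 - w).toNNReal w.toNNReal a b hsum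
    rw [Real.coe_toNNReal _ h1w.le, Real.coe_toNNReal _ hw0.le] at key
    rw [← ENNReal.coe_rpow_of_nonneg _ h1w.le, ← ENNReal.coe_rpow_of_nonneg _ hw0.le,
      ENNReal.ofReal, ENNReal.ofReal, ← ENNReal.coe_mul, ← ENNReal.coe_mul, ← ENNReal.coe_mul,
      ← ENNReal.coe_add, ENNReal.coe_le_coe]
    exact key

/-- One-dimensional Brunn–Minkowski for nonempty compact sets. -/
lemma my_bm_compact {K L : Set ℝ} (hK : IsCompact K) (hL : IsCompact L)
    (hKn : K.Nonempty) (hLn : L.Nonempty) :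
    volume K + volume L ≤ volume (K + L) := by
  have hxK : sSup K ∈ K := hK.sSup_mem hKn
  have hyL : sInf L ∈ L := hL.sInf_mem hLn
  set x := sSup K
  set y := sInf L
  have h1 : (y +ᵥ K) ∪ (x +ᵥ L) ⊆ K + L := by
    intro z hz
    rcases hz with hz | hz
    · rw [Set.mem_vadd_set] at hz
      obtain ⟨k, hk, hk'⟩ := hz
      exact ⟨k, hk, y, hyL, by rw [← hk']; exact (add_comm k y : k + y = y +ᵥ k)⟩
    · rw [Set.mem_vadd_set] at hz
      obtain ⟨m, hm, hm'⟩ := hz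
      exact ⟨x, hxK, m, hm, hm'⟩
  have h2 : (y +ᵥ K) ∩ (x +ᵥ L) ⊆ {x + y} := by
    intro z hz
    obtain ⟨hz1, hz2⟩ := hz
    rw [Set.mem_vadd_set] at hz1 hz2
    obtain ⟨k, hk, hk'⟩ := hz1
    obtain ⟨m, hm, hm'⟩ := hz2
    have e1 : y + k = z := hk'
    have e2 : x + m = z := hm'
    have hkx : k ≤ x := le_csSup hK.bddAbove hk
    have hym : y ≤ m := csInf_le hL.bddBelow hm
    have : z = x + y := by linarith
    simp [this]
  have hmeasL : MeasurableSet (x +ᵥ L) := hL.isClosed.measurableSet.const_vadd x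
  calc volume K + volume L = volume (y +ᵥ K) + volume (x +ᵥ L) := by
        rw [measure_vadd, measure_vadd]
    _ = volume ((y +ᵥ K) ∪ (x +ᵥ L)) + volume ((y +ᵥ K) ∩ (x +ᵥ L)) :=
        (measure_union_add_inter _ hmeasL).symm
    _ ≤ volume (K + L) + volume ({x + y} : Set ℝ) :=
        add_le_add (measure_mono h1) (measure_mono h2)
    _ = volume (K + L) := by rw [measure_singleton, add_zero]

/-- Inner regularity reformulated with a subtype. -/
lemma my_meas_eq_subtype_iSup {A : Set ℝ} (hA : MeasurableSet A) :
    volume A = ⨆ K : {K : Set ℝ // K ⊆ A ∧ IsCompact K}, volume (K : Set ℝ) := by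
  rw [hA.measure_eq_iSup_isCompact volume]
  apply le_antisymm
  · exact iSup_le fun K => iSup_le fun h1 => iSup_le fun h2 =>
      le_iSup_of_le ⟨K, h1, h2⟩ le_rfl
  · exact iSup_le fun K => le_iSup_of_le K.1 (by
      rw [iSup_pos K.2.1, iSup_pos K.2.2])

/-- One-dimensional Brunn–Minkowski for nonempty measurable sets. -/
lemma my_bm {A B : Set ℝ} (hA : MeasurableSet A) (hB : MeasurableSet B)
    (hAn : A.Nonempty) (hBn : B.Nonempty) :
    volume A + volume B ≤ volume (A + B) := by
  obtain ⟨a, ha⟩ := hAn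
  obtain ⟨b, hb⟩ := hBn
  rw [my_meas_eq_subtype_iSup hA, my_meas_eq_subtype_iSup hB]
  have : Nonempty {K : Set ℝ // K ⊆ A ∧ IsCompact K} :=
    ⟨⟨∅, empty_subset _, isCompact_empty⟩⟩
  have : Nonempty {L : Set ℝ // L ⊆ B ∧ IsCompact L} :=
    ⟨⟨∅, empty_subset _, isCompact_empty⟩⟩
  refine ENNReal.iSup_add_iSup_le ?_
  rintro ⟨K, hKA, hKc⟩ ⟨L, hLB, hLc⟩
  have h1 : volume K ≤ volume (insert a K) := measure_mono (subset_insert _ _)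
  have h2 : volume L ≤ volume (insert b L) := measure_mono (subset_insert _ _)
  have h3 := my_bm_compact (hKc.insert a) (hLc.insert b) ⟨a, mem_insert _ _⟩ ⟨b, mem_insert _ _⟩
  refine (add_le_add h1 h2).trans (h3.trans (measure_mono ?_))
  exact Set.add_subset_add (insert_subset ha hKA) (insert_subset hb hLB)

/-- Core normalized 1D Prékopa–Leindler. -/
lemma my_pl_core {l : ℝ} (hl0 : 0 < l) (hl1 : l < 1) (f g h : ℝ → ℝ≥0)
    (hf : Measurable f) (hg : Measurable g) (hh : Measurable h)
    (hf1 : ∀ x, f x ≤ 1) (hg1 : ∀ x, g x ≤ 1)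
    (hfs : ∀ t : ℝ≥0, t < 1 → ∃ x, t < f x) (hgs : ∀ t : ℝ≥0, t < 1 → ∃ x, t < g x)
    (hcond : ∀ x y, f x ^ (1 - l) * g y ^ l ≤ h ((1 - l) * x + l * y)) :
    ENNReal.ofReal (1 - l) * (∫⁻ x, (f x : ℝ≥0∞)) + ENNReal.ofReal l * (∫⁻ x, (g x : ℝ≥0∞))
      ≤ ∫⁻ x, (h x : ℝ≥0∞) := by
  have h1l : 0 < 1 - l := by linarith
  have layer : ∀ (k : ℝ → ℝ≥0), Measurable k →
      (∫⁻ x, (k x : ℝ≥0∞)) = ∫⁻ t in Ioi (0:ℝ), volume {a | t < (k a : ℝ)} := by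
    intro k hk
    have := lintegral_eq_lintegral_meas_lt (f := fun a => (k a : ℝ)) volume
      (Filter.Eventually.of_forall fun a => (k a).coe_nonneg)
      (NNReal.continuous_coe.measurable.comp hk).aemeasurable
    simpa using this
  have hmono : ∀ (k : ℝ → ℝ≥0), Antitone (fun t : ℝ => volume {a | t < (k a : ℝ)}) :=
    fun k s t hst => measure_mono fun a ha => lt_of_le_of_lt hst ha
  -- superlevel-set inequality on (0,1)
  have key : ∀ t ∈ Ioo (0:ℝ) 1,
      ENNReal.ofReal (1 - l) * volume {a | t < (f a : ℝ)}
        + ENNReal.ofReal l * volume {a | t < (g a : ℝ)}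
      ≤ volume {a | t < (h a : ℝ)} := by
    intro t ht
    have hAmeas : MeasurableSet {a : ℝ | t < (f a : ℝ)} :=
      measurableSet_lt measurable_const (NNReal.continuous_coe.measurable.comp hf)
    have hBmeas : MeasurableSet {a : ℝ | t < (g a : ℝ)} :=
      measurableSet_lt measurable_const (NNReal.continuous_coe.measurable.comp hg)
    have ht1 : t.toNNReal < 1 := by simp [Real.toNNReal_lt_one, ht.2]
    have hAn : Set.Nonempty {a : ℝ | t < (f a : ℝ)} := by
      obtain ⟨x, hx⟩ := hfs t.toNNReal ht1
      exact ⟨x, (Real.toNNReal_lt_iff_lt_coe ht.1.le).mp hx⟩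
    have hBn : Set.Nonempty {a : ℝ | t < (g a : ℝ)} := by
      obtain ⟨x, hx⟩ := hgs t.toNNReal ht1
      exact ⟨x, (Real.toNNReal_lt_iff_lt_coe ht.1.le).mp hx⟩
    have hsub : (1 - l) • {a : ℝ | t < (f a : ℝ)} + l • {a : ℝ | t < (g a : ℝ)}
        ⊆ {a : ℝ | t < (h a : ℝ)} := by
      intro z hz
      rw [Set.mem_add] at hz
      obtain ⟨u, hu, v, hv, huv⟩ := hz
      rw [Set.mem_smul_set] at hu hv
      obtain ⟨a, ha, rfl⟩ := hu
      obtain ⟨b, hb, rfl⟩ := hv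
      have hc := hcond a b
      have h3 : t < (f a : ℝ) ^ (1 - l) * (g b : ℝ) ^ l := by
        have ht' : t ^ (1 - l) * t ^ l = t := by
          rw [← Real.rpow_add ht.1]; norm_num
        calc t = t ^ (1 - l) * t ^ l := ht'.symm
          _ < (f a : ℝ) ^ (1 - l) * (g b : ℝ) ^ l :=
            mul_lt_mul'' (Real.rpow_lt_rpow ht.1.le ha h1l)
              (Real.rpow_lt_rpow ht.1.le hb hl0)
              (Real.rpow_nonneg ht.1.le _) (Real.rpow_nonneg ht.1.le _)
      have hz' : (1 - l) • a + l • b = (1 - l) * a + l * b := by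
        rw [smul_eq_mul, smul_eq_mul]
      rw [← huv]
      show t < (h ((1 - l) • a + l • b) : ℝ)
      rw [hz']
      calc t < (f a : ℝ) ^ (1 - l) * (g b : ℝ) ^ l := h3
        _ = ((f a ^ (1 - l) * g b ^ l : ℝ≥0) : ℝ) := by
          rw [NNReal.coe_mul, NNReal.coe_rpow, NNReal.coe_rpow]
        _ ≤ (h ((1 - l) * a + l * b) : ℝ) := NNReal.coe_le_coe.mpr hc
    have hbm := my_bm (hAmeas.const_smul₀ (1 - l)) (hBmeas.const_smul₀ l)
      (hAn.smul_set) (hBn.smul_set)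
    have hsA : volume ((1 - l) • {a : ℝ | t < (f a : ℝ)})
        = ENNReal.ofReal (1 - l) * volume {a : ℝ | t < (f a : ℝ)} := by
      have := Measure.addHaar_smul volume (1 - l) {a : ℝ | t < (f a : ℝ)}
      simpa [abs_of_pos h1l] using this
    have hsB : volume (l • {a : ℝ | t < (g a : ℝ)})
        = ENNReal.ofReal l * volume {a : ℝ | t < (g a : ℝ)} := by
      have := Measure.addHaar_smul volume l {a : ℝ | t < (g a : ℝ)}
      simpa [abs_of_pos hl0] using this
    rw [← hsA, ← hsB]
    exact hbm.trans (measure_mono hsub)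
  -- truncation of the t-integrals at 1
  have trunc : ∀ (k : ℝ → ℝ≥0), (∀ x, k x ≤ 1) →
      (∫⁻ t in Ioi (0:ℝ), volume {a | t < (k a : ℝ)})
        = ∫⁻ t in Ioo (0:ℝ) 1, volume {a | t < (k a : ℝ)} := by
    intro k hk1
    rw [← Ioo_union_Ici_eq_Ioi (zero_lt_one : (0:ℝ) < 1),
      lintegral_union measurableSet_Ici
        (disjoint_left.mpr (fun x hx hx' => absurd hx' (not_le.mpr hx.2)))]
    have hzero : ∫⁻ t in Ici (1:ℝ), volume {a | t < (k a : ℝ)} = 0 := by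
      have : ∀ t ∈ Ici (1:ℝ), volume {a | t < (k a : ℝ)} = (0:ℝ≥0∞) := by
        intro t ht
        have : {a : ℝ | t < (k a : ℝ)} = ∅ := by
          ext a
          simp only [mem_setOf_eq, mem_empty_iff_false, iff_false, not_lt]
          calc (k a : ℝ) ≤ ((1:ℝ≥0) : ℝ) := NNReal.coe_le_coe.mpr (hk1 a)
            _ = 1 := by norm_num
            _ ≤ t := ht
        rw [this, measure_empty]
      rw [setLIntegral_congr_fun measurableSet_Ici
        (fun t ht => this t ht), lintegral_zero]
    rw [hzero, add_zero]
  rw [layer f hf, layer g hg, layer h hh, trunc f hf1, trunc g hg1]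
  calc ENNReal.ofReal (1 - l) * (∫⁻ t in Ioo (0:ℝ) 1, volume {a | t < (f a : ℝ)})
        + ENNReal.ofReal l * (∫⁻ t in Ioo (0:ℝ) 1, volume {a | t < (g a : ℝ)})
      = ∫⁻ t in Ioo (0:ℝ) 1, (ENNReal.ofReal (1 - l) * volume {a | t < (f a : ℝ)}
          + ENNReal.ofReal l * volume {a | t < (g a : ℝ)}) := by
        rw [lintegral_add_left ((hmono f).measurable.const_mul _),
          lintegral_const_mul _ (hmono f).measurable, lintegral_const_mul _ (hmono g).measurable]
    _ ≤ ∫⁻ t in Ioo (0:ℝ) 1, volume {a | t < (h a : ℝ)} :=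
        setLIntegral_mono (hmono h).measurable key
    _ ≤ ∫⁻ t in Ioi (0:ℝ), volume {a | t < (h a : ℝ)} :=
        lintegral_mono' (Measure.restrict_mono Ioo_subset_Ioi_self le_rfl) le_rfl

/-- 1D Prékopa–Leindler for bounded functions. -/
lemma my_pl_bdd {l : ℝ} (hl0 : 0 < l) (hl1 : l < 1) (f g h : ℝ → ℝ≥0) (n : ℝ≥0)
    (hf : Measurable f) (hg : Measurable g) (hh : Measurable h)
    (hfb : ∀ x, f x ≤ n) (hgb : ∀ x, g x ≤ n)
    (hcond : ∀ x y, f x ^ (1 - l) * g y ^ l ≤ h ((1 - l) * x + l * y)) :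
    (∫⁻ x, (f x : ℝ≥0∞)) ^ (1 - l) * (∫⁻ x, (g x : ℝ≥0∞)) ^ l ≤ ∫⁻ x, (h x : ℝ≥0∞) := by
  have h1l : 0 < 1 - l := by linarith
  have hbddf : BddAbove (Set.range f) := ⟨n, by rintro _ ⟨x, rfl⟩; exact hfb x⟩
  have hbddg : BddAbove (Set.range g) := ⟨n, by rintro _ ⟨x, rfl⟩; exact hgb x⟩
  set Mf := ⨆ x, f x with hMf
  set Mg := ⨆ x, g x with hMg
  rcases eq_or_ne Mf 0 with hMf0 | hMf0
  · have : ∀ x, f x = 0 := fun x => le_antisymm (hMf0 ▸ le_ciSup hbddf x) (zero_le)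
    have hint : (∫⁻ x, (f x : ℝ≥0∞)) = 0 := by simp [this]
    rw [hint, ENNReal.zero_rpow_of_pos h1l, zero_mul]
    exact zero_le
  rcases eq_or_ne Mg 0 with hMg0 | hMg0
  · have : ∀ x, g x = 0 := fun x => le_antisymm (hMg0 ▸ le_ciSup hbddg x) (zero_le)
    have hint : (∫⁻ x, (g x : ℝ≥0∞)) = 0 := by simp [this]
    rw [hint, ENNReal.zero_rpow_of_pos hl0, mul_zero]
    exact zero_le
  have hMfpos : 0 < Mf := pos_iff_ne_zero.mpr hMf0
  have hMgpos : 0 < Mg := pos_iff_ne_zero.mpr hMg0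
  set C : ℝ≥0 := Mf ^ (1 - l) * Mg ^ l with hC
  have hCpos : 0 < C := mul_pos (NNReal.rpow_pos hMfpos) (NNReal.rpow_pos hMgpos)
  -- normalized functions
  set f' : ℝ → ℝ≥0 := fun x => f x / Mf with hf'
  set g' : ℝ → ℝ≥0 := fun x => g x / Mg with hg'
  set h' : ℝ → ℝ≥0 := fun x => h x / C with hh'
  have core := my_pl_core hl0 hl1 f' g' h'
    (hf.div_const Mf) (hg.div_const Mg) (hh.div_const C)
    (fun x => (div_le_one hMfpos).mpr (le_ciSup hbddf x))
    (fun x => (div_le_one hMgpos).mpr (le_ciSup hbddg x))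
    (fun t ht => by
      obtain ⟨x, hx⟩ := exists_lt_of_lt_ciSup (show t * Mf < Mf from
        mul_lt_of_lt_one_left hMfpos ht)
      exact ⟨x, (lt_div_iff₀ hMfpos).mpr hx⟩)
    (fun t ht => by
      obtain ⟨x, hx⟩ := exists_lt_of_lt_ciSup (show t * Mg < Mg from
        mul_lt_of_lt_one_left hMgpos ht)
      exact ⟨x, (lt_div_iff₀ hMgpos).mpr hx⟩)
    (fun x y => by
      show (f x / Mf) ^ (1 - l) * (g y / Mg) ^ l ≤ h ((1 - l) * x + l * y) / C
      rw [NNReal.div_rpow, NNReal.div_rpow, div_mul_div_comm]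
      rw [div_eq_mul_inv, div_eq_mul_inv]
      exact mul_le_mul_left (hcond x y) _)
  -- rewrite the normalized integrals
  have hintf : (∫⁻ x, (f' x : ℝ≥0∞)) = (∫⁻ x, (f x : ℝ≥0∞)) * ((Mf : ℝ≥0∞))⁻¹ := by
    calc (∫⁻ x, (f' x : ℝ≥0∞)) = ∫⁻ x, (f x : ℝ≥0∞) * ((Mf : ℝ≥0∞))⁻¹ := by
          apply lintegral_congr; intro x
          rw [hf', ENNReal.coe_div hMf0, div_eq_mul_inv]
      _ = (∫⁻ x, (f x : ℝ≥0∞)) * ((Mf : ℝ≥0∞))⁻¹ :=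
          lintegral_mul_const _ (measurable_coe_nnreal_ennreal.comp hf)
  have hintg : (∫⁻ x, (g' x : ℝ≥0∞)) = (∫⁻ x, (g x : ℝ≥0∞)) * ((Mg : ℝ≥0∞))⁻¹ := by
    calc (∫⁻ x, (g' x : ℝ≥0∞)) = ∫⁻ x, (g x : ℝ≥0∞) * ((Mg : ℝ≥0∞))⁻¹ := by
          apply lintegral_congr; intro x
          rw [hg', ENNReal.coe_div hMg0, div_eq_mul_inv]
      _ = (∫⁻ x, (g x : ℝ≥0∞)) * ((Mg : ℝ≥0∞))⁻¹ :=
          lintegral_mul_const _ (measurable_coe_nnreal_ennreal.comp hg)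
  have hinth : (∫⁻ x, (h' x : ℝ≥0∞)) = (∫⁻ x, (h x : ℝ≥0∞)) * ((C : ℝ≥0∞))⁻¹ := by
    calc (∫⁻ x, (h' x : ℝ≥0∞)) = ∫⁻ x, (h x : ℝ≥0∞) * ((C : ℝ≥0∞))⁻¹ := by
          apply lintegral_congr; intro x
          rw [hh', ENNReal.coe_div hCpos.ne', div_eq_mul_inv]
      _ = (∫⁻ x, (h x : ℝ≥0∞)) * ((C : ℝ≥0∞))⁻¹ :=
          lintegral_mul_const _ (measurable_coe_nnreal_ennreal.comp hh)
  have amgm := my_ennreal_am_gm (∫⁻ x, (f' x : ℝ≥0∞)) (∫⁻ x, (g' x : ℝ≥0∞)) hl0 hl1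
  have chain : (∫⁻ x, (f' x : ℝ≥0∞)) ^ (1 - l) * (∫⁻ x, (g' x : ℝ≥0∞)) ^ l
      ≤ (∫⁻ x, (h x : ℝ≥0∞)) * ((C : ℝ≥0∞))⁻¹ := by
    rw [← hinth]; exact amgm.trans core
  rw [hintf, hintg, ENNReal.mul_rpow_of_nonneg _ _ h1l.le, ENNReal.mul_rpow_of_nonneg _ _ hl0.le]
    at chain
  have hrw : ((Mf : ℝ≥0∞))⁻¹ ^ (1 - l) * ((Mg : ℝ≥0∞))⁻¹ ^ l = ((C : ℝ≥0∞))⁻¹ := by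
    rw [← ENNReal.coe_inv hMf0, ← ENNReal.coe_inv hMg0,
      ← ENNReal.coe_rpow_of_nonneg _ h1l.le, ← ENNReal.coe_rpow_of_nonneg _ hl0.le,
      ← ENNReal.coe_mul, ← ENNReal.coe_inv hCpos.ne', ENNReal.coe_inj, hC,
      mul_inv, NNReal.inv_rpow, NNReal.inv_rpow]
  have chain2 : ((∫⁻ x, (f x : ℝ≥0∞)) ^ (1 - l) * (∫⁻ x, (g x : ℝ≥0∞)) ^ l) * ((C : ℝ≥0∞))⁻¹
      ≤ (∫⁻ x, (h x : ℝ≥0∞)) * ((C : ℝ≥0∞))⁻¹ := by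
    calc ((∫⁻ x, (f x : ℝ≥0∞)) ^ (1 - l) * (∫⁻ x, (g x : ℝ≥0∞)) ^ l) * ((C : ℝ≥0∞))⁻¹
        = ((∫⁻ x, (f x : ℝ≥0∞)) ^ (1 - l) * ((Mf : ℝ≥0∞))⁻¹ ^ (1 - l))
          * ((∫⁻ x, (g x : ℝ≥0∞)) ^ l * ((Mg : ℝ≥0∞))⁻¹ ^ l) := by
          rw [← hrw]; ring
      _ ≤ (∫⁻ x, (h x : ℝ≥0∞)) * ((C : ℝ≥0∞))⁻¹ := chain
  exact (ENNReal.mul_le_mul_iff_left (ENNReal.inv_ne_zero.mpr ENNReal.coe_ne_top)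
    (ENNReal.inv_ne_top.mpr (ENNReal.coe_ne_zero.mpr hCpos.ne'))).mp chain2

/-- 1D Prékopa–Leindler, multiplicative hypothesis, additive variables. -/
lemma my_pl {l : ℝ} (hl0 : 0 < l) (hl1 : l < 1) (f g h : ℝ → ℝ≥0)
    (hf : Measurable f) (hg : Measurable g) (hh : Measurable h)
    (hcond : ∀ x y, f x ^ (1 - l) * g y ^ l ≤ h ((1 - l) * x + l * y)) :
    (∫⁻ x, (f x : ℝ≥0∞)) ^ (1 - l) * (∫⁻ x, (g x : ℝ≥0∞)) ^ l ≤ ∫⁻ x, (h x : ℝ≥0∞) := by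
  have h1l : 0 < 1 - l := by linarith
  set fn : ℕ → ℝ → ℝ≥0 := fun n x => min (f x) n with hfn
  set gn : ℕ → ℝ → ℝ≥0 := fun n x => min (g x) n with hgn
  have hfnm : ∀ n, Measurable (fn n) := fun n => hf.min measurable_const
  have hgnm : ∀ n, Measurable (gn n) := fun n => hg.min measurable_const
  have hbound : ∀ n, (∫⁻ x, (fn n x : ℝ≥0∞)) ^ (1 - l) * (∫⁻ x, (gn n x : ℝ≥0∞)) ^ l
      ≤ ∫⁻ x, (h x : ℝ≥0∞) := by
    intro n
    apply my_pl_bdd hl0 hl1 (fn n) (gn n) h n (hfnm n) (hgnm n) hh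
      (fun x => min_le_right _ _) (fun x => min_le_right _ _)
    intro x y
    calc fn n x ^ (1 - l) * gn n y ^ l ≤ f x ^ (1 - l) * g y ^ l :=
        mul_le_mul' (NNReal.rpow_le_rpow (min_le_left _ _) h1l.le)
          (NNReal.rpow_le_rpow (min_le_left _ _) hl0.le)
      _ ≤ h ((1 - l) * x + l * y) := hcond x y
  -- monotone convergence
  have hconv : ∀ (k : ℝ → ℝ≥0), Measurable k → (∀ n : ℕ, Measurable (fun x => min (k x) (n : ℝ≥0))) →
      (∫⁻ x, (k x : ℝ≥0∞)) = ⨆ n : ℕ, ∫⁻ x, ((min (k x) n : ℝ≥0) : ℝ≥0∞) := by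
    intro k hk hkn
    have hmc := lintegral_iSup (μ := volume)
      (f := fun (n : ℕ) (x : ℝ) => ((min (k x) n : ℝ≥0) : ℝ≥0∞))
      (fun n => (hkn n).coe_nnreal_ennreal)
      (fun n m hnm x => ENNReal.coe_le_coe.mpr (min_le_min le_rfl (Nat.mono_cast hnm)))
    rw [← hmc]
    apply lintegral_congr; intro x
    apply le_antisymm
    · obtain ⟨n, hn⟩ := exists_nat_ge (k x : ℝ)
      refine le_iSup_of_le n ?_
      have hmin : min (k x) (n : ℝ≥0) = k x := min_eq_left (by
        rw [← NNReal.coe_le_coe]; push_cast; exact hn)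
      rw [hmin]
    · exact iSup_le fun n => ENNReal.coe_le_coe.mpr (min_le_left _ _)
  have hconvf : (∫⁻ x, (f x : ℝ≥0∞)) = ⨆ n, ∫⁻ x, (fn n x : ℝ≥0∞) :=
    hconv f hf hfnm
  have hconvg : (∫⁻ x, (g x : ℝ≥0∞)) = ⨆ n, ∫⁻ x, (gn n x : ℝ≥0∞) :=
    hconv g hg hgnm
  have hsf : (⨆ n, ∫⁻ x, (fn n x : ℝ≥0∞)) ^ (1 - l)
      = ⨆ n, (∫⁻ x, (fn n x : ℝ≥0∞)) ^ (1 - l) := by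
    simpa only [ENNReal.orderIsoRpow_apply] using
      (ENNReal.orderIsoRpow (1 - l) h1l).map_iSup (fun n => ∫⁻ x, (fn n x : ℝ≥0∞))
  have hsg : (⨆ n, ∫⁻ x, (gn n x : ℝ≥0∞)) ^ l
      = ⨆ n, (∫⁻ x, (gn n x : ℝ≥0∞)) ^ l := by
    simpa only [ENNReal.orderIsoRpow_apply] using
      (ENNReal.orderIsoRpow l hl0).map_iSup (fun n => ∫⁻ x, (gn n x : ℝ≥0∞))
  rw [hconvf, hconvg, hsf, hsg, ENNReal.iSup_mul]
  refine iSup_le fun n => ?_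
  rw [ENNReal.mul_iSup]
  refine iSup_le fun m => ?_
  have hf_mono : ∀ x, fn n x ≤ fn (max n m) x := fun x =>
    min_le_min le_rfl (Nat.mono_cast (le_max_left n m))
  have hg_mono : ∀ x, gn m x ≤ gn (max n m) x := fun x =>
    min_le_min le_rfl (Nat.mono_cast (le_max_right n m))
  calc (∫⁻ x, (fn n x : ℝ≥0∞)) ^ (1 - l) * (∫⁻ x, (gn m x : ℝ≥0∞)) ^ l
      ≤ (∫⁻ x, (fn (max n m) x : ℝ≥0∞)) ^ (1 - l) * (∫⁻ x, (gn (max n m) x : ℝ≥0∞)) ^ l :=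
        mul_le_mul'
          (ENNReal.rpow_le_rpow (lintegral_mono fun x => ENNReal.coe_le_coe.mpr (hf_mono x)) h1l.le)
          (ENNReal.rpow_le_rpow (lintegral_mono fun x => ENNReal.coe_le_coe.mpr (hg_mono x)) hl0.le)
    _ ≤ ∫⁻ x, (h x : ℝ≥0∞) := hbound (max n m)

/-- Change of variables `t = exp x` for lintegrals on `(0, ∞)`. -/
lemma my_cov_exp (g : ℝ → ℝ≥0∞) :
    ∫⁻ t in Ioi (0:ℝ), g t = ∫⁻ x, ENNReal.ofReal (Real.exp x) * g (Real.exp x) := by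
  have hderiv : ∀ x ∈ (univ : Set ℝ), HasFDerivWithinAt Real.exp
      ((1 : ℝ →L[ℝ] ℝ).smulRight (Real.exp x)) univ x :=
    fun x _ => ((Real.hasDerivAt_exp x).hasDerivWithinAt).hasFDerivWithinAt
  have := lintegral_image_eq_lintegral_abs_det_fderiv_mul volume MeasurableSet.univ
    hderiv (Real.exp_injective.injOn) g
  rw [Set.image_univ, Real.range_exp] at this
  rw [this]
  simp [ContinuousLinearMap.det_toSpanSingleton, abs_of_pos (Real.exp_pos _)]

/-- Multiplicative form of the one-dimensional Prékopa–Leindler inequality. -/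
theorem multiplicative_prekopa_leindler (τ l : ℝ) (hτ : τ ∈ Set.Ioc (0:ℝ) (1/2))
    (hl : l ∈ Set.Icc τ (1 - τ)) (F G H : ℝ → ℝ≥0)
    (hF : Measurable F) (hG : Measurable G) (hH : Measurable H)
    (hcond : ∀ r s : ℝ, 0 ≤ r → 0 ≤ s → F r ^ (1 - l) * G s ^ l ≤ H (r ^ (1 - l) * s ^ l)) :
    (∫⁻ t in Set.Ioi (0:ℝ), (F t : ℝ≥0∞)) ^ (1 - l)
        * (∫⁻ t in Set.Ioi (0:ℝ), (G t : ℝ≥0∞)) ^ l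
      ≤ ∫⁻ t in Set.Ioi (0:ℝ), (H t : ℝ≥0∞) := by
  have hl0 : 0 < l := lt_of_lt_of_le hτ.1 hl.1
  have hl1 : l < 1 := lt_of_le_of_lt hl.2 (by linarith [hτ.1])
  have h1l : 0 < 1 - l := by linarith
  set f : ℝ → ℝ≥0 := fun x => F (Real.exp x) * (Real.exp x).toNNReal with hfd
  set g : ℝ → ℝ≥0 := fun x => G (Real.exp x) * (Real.exp x).toNNReal with hgd
  set h : ℝ → ℝ≥0 := fun x => H (Real.exp x) * (Real.exp x).toNNReal with hhd
  have hexpm : Measurable (fun x : ℝ => (Real.exp x).toNNReal) :=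
    measurable_real_toNNReal.comp Real.measurable_exp
  have hfm : Measurable f := (hF.comp Real.measurable_exp).mul hexpm
  have hgm : Measurable g := (hG.comp Real.measurable_exp).mul hexpm
  have hhm : Measurable h := (hH.comp Real.measurable_exp).mul hexpm
  have hcond' : ∀ x y, f x ^ (1 - l) * g y ^ l ≤ h ((1 - l) * x + l * y) := by
    intro x y
    have hr : (0:ℝ) ≤ Real.exp x := (Real.exp_pos x).le
    have hs : (0:ℝ) ≤ Real.exp y := (Real.exp_pos y).le
    have hexp_eq : Real.exp x ^ (1 - l) * Real.exp y ^ l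
        = Real.exp ((1 - l) * x + l * y) := by
      rw [← Real.exp_mul, ← Real.exp_mul, ← Real.exp_add]
      ring_nf
    have htoNN : (Real.exp x).toNNReal ^ (1 - l) * (Real.exp y).toNNReal ^ l
        = (Real.exp ((1 - l) * x + l * y)).toNNReal := by
      rw [← Real.toNNReal_rpow_of_nonneg hr, ← Real.toNNReal_rpow_of_nonneg hs,
        ← Real.toNNReal_mul (Real.rpow_nonneg hr _), hexp_eq]
    calc f x ^ (1 - l) * g y ^ l
        = (F (Real.exp x) ^ (1 - l) * G (Real.exp y) ^ l)
          * ((Real.exp x).toNNReal ^ (1 - l) * (Real.exp y).toNNReal ^ l) := by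
          rw [hfd, hgd]
          simp only [NNReal.mul_rpow]
          ring
      _ = (F (Real.exp x) ^ (1 - l) * G (Real.exp y) ^ l)
          * (Real.exp ((1 - l) * x + l * y)).toNNReal := by rw [htoNN]
      _ ≤ H (Real.exp x ^ (1 - l) * Real.exp y ^ l)
          * (Real.exp ((1 - l) * x + l * y)).toNNReal :=
          mul_le_mul_left (hcond _ _ hr hs) _
      _ = h ((1 - l) * x + l * y) := by rw [hhd, hexp_eq]
  have hPL := my_pl hl0 hl1 f g h hfm hgm hhm hcond'
  have hcov : ∀ (K : ℝ → ℝ≥0),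
      (∫⁻ t in Ioi (0:ℝ), (K t : ℝ≥0∞))
        = ∫⁻ x, ((K (Real.exp x) * (Real.exp x).toNNReal : ℝ≥0) : ℝ≥0∞) := by
    intro K
    rw [my_cov_exp (fun t => (K t : ℝ≥0∞))]
    apply lintegral_congr; intro x
    rw [ENNReal.coe_mul, ENNReal.ofReal, mul_comm]
  rw [hcov F, hcov G, hcov H]
  exact hPL
end
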